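/- arXiv:2501.15127 — 2 statements merged into one kernel-verified Lean document; each statement's English description precedes it below -/
import Mathlib

section
/- For any constant c > 0 and dimensions d₁ ≥ d₂ ≥ 1, it holds that T_{d₁,c}(α) ≤ T_{d₂,c}(α) for every α ∈ [0,1]. -/
open MeasureTheory ProbabilityTheory Real Filter Topology
open scoped NNReal ENNReal

noncomputable section

/-- The exponential distribution with rate 1 on `ℝ`. -/
def expOne : Measure ℝ :=
  (volume.restrict (Set.Ioi (0 : ℝ))).withDensity fun w => ENNReal.ofReal (Real.exp (-w))

/-- The centered Gaussian measure on `ℝ^d` with covariance matrix `σ2 • I_d`. -/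
def gaussPi (d : ℕ) (σ2 : ℝ) : Measure (Fin d → ℝ) :=
  Measure.pi fun _ => gaussianReal 0 σ2.toNNReal

/-- The symmetric multivariate Laplace distribution `SL_d(σ2 • I_d)`:
the law of `√W • X` with `W ~ Exp(1)` and `X ~ N(0, σ2 I_d)` independent. -/
def SLM (d : ℕ) (σ2 : ℝ) : Measure (Fin d → ℝ) :=
  Measure.map (fun p : ℝ × (Fin d → ℝ) => Real.sqrt p.1 • p.2) (expOne.prod (gaussPi d σ2))

/-- The zero-inflated symmetric multivariate Laplace distribution `ZIL(δ, σ2 • I_d)`: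
the law of `1{ξ = 0} • S` with `ξ ~ Bernoulli(δ)` and `S ~ SL_d(σ2 I_d)` independent. -/
def ZILM (d : ℕ) (δ : ℝ) (σ2 : ℝ) : Measure (Fin d → ℝ) :=
  ENNReal.ofReal δ • Measure.dirac (0 : Fin d → ℝ) + ENNReal.ofReal (1 - δ) • SLM d σ2

/-- The trade-off function `T(P, Q)` between two measures. -/
def tradeOff {Ω : Type*} [MeasurableSpace Ω] (P Q : Measure Ω) (α : ℝ) : ℝ :=
  sInf {b | ∃ φ : Ω → ℝ, Measurable φ ∧ (∀ ω, φ ω ∈ Set.Icc (0 : ℝ) 1) ∧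
    (∫ ω, φ ω ∂P) ≤ α ∧ b = 1 - ∫ ω, φ ω ∂Q}

/-- `T_{d,c}`: the trade-off function between `SL_d(I_d)` and `(c, 0, …, 0)ᵀ + SL_d(I_d)`. -/
def Tdc (d : ℕ) (c : ℝ) (α : ℝ) : ℝ :=
  tradeOff (SLM d 1)
    (Measure.map (fun x => (fun j : Fin d => if (j : ℕ) = 0 then c else 0) + x) (SLM d 1)) α

/-- `T_{d,c,δ}`. -/
def Tdcd (d : ℕ) (c δ : ℝ) (α : ℝ) : ℝ :=
  if α ≤ 1 - δ then (1 - δ) * Tdc d c (α / (1 - δ)) else 0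

/-- The law `P` of `(√W · X₁, W)`. -/
def pairP : Measure (ℝ × ℝ) :=
  Measure.map (fun p : ℝ × ℝ => (Real.sqrt p.1 * p.2, p.1)) (expOne.prod (gaussianReal 0 1))

/-- The law `Q` of `(c + √W · X₁, W)`. -/
def pairQ (c : ℝ) : Measure (ℝ × ℝ) :=
  Measure.map (fun p : ℝ × ℝ => (c + Real.sqrt p.1 * p.2, p.1)) (expOne.prod (gaussianReal 0 1))

/-- `β_c`: the trade-off function between the laws of `(√W·X₁, W)` and `(c + √W·X₁, W)`. -/
def betaC (c : ℝ) (α : ℝ) : ℝ := tradeOff pairP (pairQ c) α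

/-- `β_{c,δ}`. -/
def betaCD (c δ : ℝ) (α : ℝ) : ℝ :=
  if α ≤ 1 - δ then (1 - δ) * betaC c (α / (1 - δ)) else 0

/-- The standard normal cumulative distribution function `Φ`. -/
def stdNormCDF (x : ℝ) : ℝ := ((gaussianReal 0 1) (Set.Iic x)).toReal

/-- `F_c(x) = ∫₀^∞ Φ(√w·x/c + c/(2√w)) e^{−w} dw`. -/
def Fc (c x : ℝ) : ℝ :=
  ∫ w in Set.Ioi (0 : ℝ),
    stdNormCDF (Real.sqrt w * x / c + c / (2 * Real.sqrt w)) * Real.exp (-w)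

/-- The quantile function of `F_c`. -/
def FcInv (c p : ℝ) : ℝ := sInf {x : ℝ | p ≤ Fc c x}

end

/-!
Projecting onto the first `d₂` coordinates maps `SL_{d₁}(I)` to `SL_{d₂}(I)` and the shifted law
in dimension `d₁` to the shifted law in dimension `d₂`. Every test in dimension `d₂` composed with
this projection is a test in dimension `d₁` with the same errors, so the infimum defining
`T_{d₁,c}` runs over a larger set than the one defining `T_{d₂,c}`.
-/

open MeasureTheory ProbabilityTheory Function

theorem tradeOff_le_tradeOff_map {Ω Ω' : Type*} [MeasurableSpace Ω] [MeasurableSpace Ω']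
    {P Q : Measure Ω} [IsFiniteMeasure Q] {f : Ω → Ω'} (hf : Measurable f) {α : ℝ}
    (hα : 0 ≤ α) : tradeOff P Q α ≤ tradeOff (P.map f) (Q.map f) α := by
  apply csInf_le_csInf
  · refine ⟨1 - Q.real Set.univ, ?_⟩
    rintro _ ⟨φ, -, hφ, -, rfl⟩
    have : ∫ ω, φ ω ∂Q ≤ ∫ _, (1 : ℝ) ∂Q :=
      integral_mono_of_nonneg (.of_forall fun ω => (hφ ω).1) (integrable_const 1)
        (.of_forall fun ω => (hφ ω).2)
    simp only [integral_const, smul_eq_mul, mul_one] at this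
    linarith
  · exact ⟨1, fun _ => 0, measurable_const, by simp, by simpa using hα, by simp⟩
  · rintro _ ⟨φ, hφm, hφ, hP, rfl⟩
    refine ⟨φ ∘ f, hφm.comp hf, fun ω => hφ (f ω), ?_, ?_⟩
    · exact (integral_map hf.aemeasurable hφm.aestronglyMeasurable).symm.trans_le hP
    · rw [integral_map hf.aemeasurable hφm.aestronglyMeasurable]
      rfl

theorem MeasureTheory.Measure.pi_map_comp_of_injective {ι ι' X : Type*} [Fintype ι] [Fintype ι']
    [MeasurableSpace X] (μ : ι → Measure X) [∀ i, IsProbabilityMeasure (μ i)] {g : ι' → ι}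
    (hg : Injective g) : (Measure.pi μ).map (fun x => x ∘ g) = Measure.pi fun j => μ (g j) := by
  refine (Measure.pi_eq fun s hs => ?_).symm
  have hpre : (fun x : ι → X => x ∘ g) ⁻¹' Set.univ.pi s =
      Set.univ.pi (Function.extend g s fun _ => Set.univ) := by
    ext x
    simp only [Set.mem_preimage, Set.mem_univ_pi, comp_apply]
    refine ⟨fun h i => ?_, fun h j => by simpa [hg.extend_apply] using h (g j)⟩
    by_cases hi : ∃ j, g j = i
    · obtain ⟨j, rfl⟩ := hi
      simpa [hg.extend_apply] using h j
    · rw [extend_apply' _ _ _ hi]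
      trivial
  rw [Measure.map_apply (by fun_prop) (.univ_pi hs), hpre, Measure.pi_pi]
  refine (Fintype.prod_of_injective g hg _ _ (fun i hi => ?_) fun j => by
    simp [hg.extend_apply]).symm
  simp [extend_apply' _ _ _ (by simpa using hi)]

instance : IsProbabilityMeasure expOne := by
  constructor
  have hint : IntegrableOn (fun w : ℝ => Real.exp (-w)) (Set.Ioi 0) := by
    simpa using exp_neg_integrableOn_Ioi 0 one_pos
  rw [expOne, withDensity_apply _ MeasurableSet.univ, Measure.restrict_univ,
    ← ofReal_integral_eq_lintegral_ofReal hint (.of_forall fun w => (Real.exp_pos _).le),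
    integral_exp_neg_Ioi_zero, ENNReal.ofReal_one]

instance (d : ℕ) (σ2 : ℝ) : IsProbabilityMeasure (gaussPi d σ2) := by
  unfold gaussPi
  infer_instance

instance (d : ℕ) (σ2 : ℝ) : IsProbabilityMeasure (SLM d σ2) :=
  Measure.isProbabilityMeasure_map (by fun_prop)

theorem SLM_map_comp_of_injective {d₁ d₂ : ℕ} (σ2 : ℝ) {g : Fin d₂ → Fin d₁}
    (hg : Injective g) : (SLM d₁ σ2).map (fun x => x ∘ g) = SLM d₂ σ2 := by
  have hscale : (fun x : Fin d₁ → ℝ => x ∘ g) ∘ (fun p : ℝ × (Fin d₁ → ℝ) => √p.1 • p.2) =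
      (fun p : ℝ × (Fin d₂ → ℝ) => √p.1 • p.2) ∘ Prod.map id (fun x => x ∘ g) := rfl
  rw [SLM, SLM, Measure.map_map (by fun_prop) (by fun_prop), hscale,
    ← Measure.map_map (by fun_prop) (by fun_prop),
    ← Measure.map_prod_map _ _ measurable_id (by fun_prop), Measure.map_id, gaussPi, gaussPi,
    Measure.pi_map_comp_of_injective _ hg]

theorem map_comp_map_add {ι ι' : Type*} (P : Measure (ι → ℝ)) (v : ι → ℝ) (g : ι' → ι) :
    ((P.map (v + ·)).map fun x => x ∘ g) = (P.map fun x => x ∘ g).map (v ∘ g + ·) := by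
  rw [Measure.map_map (by fun_prop) (by fun_prop), Measure.map_map (by fun_prop) (by fun_prop)]
  rfl

theorem Tdc_anti_in_d_general (c : ℝ) (d₁ d₂ : ℕ) (hd : d₂ ≤ d₁) :
    ∀ α ∈ Set.Icc (0 : ℝ) 1, Tdc d₁ c α ≤ Tdc d₂ c α := by
  rintro α ⟨hα, -⟩
  have key := tradeOff_le_tradeOff_map (P := SLM d₁ 1)
    (Q := (SLM d₁ 1).map ((fun j : Fin d₁ => if (j : ℕ) = 0 then c else 0) + ·))
    (f := fun x => x ∘ Fin.castLE hd) (by fun_prop) hα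
  -- the shift vector composed with `Fin.castLE hd` is the shift vector in dimension `d₂` by `rfl`
  rwa [map_comp_map_add, SLM_map_comp_of_injective 1 (Fin.castLE_injective hd)] at key

/-- For any `c > 0` and dimensions `d₁ ≥ d₂ ≥ 1`,
`T_{d₁,c}(α) ≤ T_{d₂,c}(α)` for every `α ∈ [0,1]`. -/
theorem Tdc_anti_in_d (c : ℝ) (hc : 0 < c) (d₁ d₂ : ℕ) (hd₂ : 1 ≤ d₂) (hd : d₂ ≤ d₁) :
    ∀ α ∈ Set.Icc (0 : ℝ) 1, Tdc d₁ c α ≤ Tdc d₂ c α :=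
  Tdc_anti_in_d_general c d₁ d₂ hd
end

section
/- For every c > 0, the function β_c is strictly decreasing, convex and continuous on [0,1]; it satisfies β_c(α) ≤ 1 − α for all α ∈ [0,1]; and it is symmetric about the 45-degree line, i.e. β_c(α) = β_c^{-1}(α) for all α ∈ [0,1], where β_c^{-1}(α) := inf{t ∈ [0,1] : β_c(t) ≤ α}. -/
open MeasureTheory ProbabilityTheory Real Filter Topology
open scoped NNReal ENNReal

/-!
Apart from the symmetry, every property holds for the trade-off function `T` of any two mutually
absolutely continuous probability measures `P` and `Q`: constant tests give `T(α) ≤ 1 - α`,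
mixing tests gives convexity, and splitting a likelihood ratio at a level `K` gives `T(α) > 0`
for `α < 1` and `T(α) → 1` as `α → 0`. Convexity and positivity force strict monotonicity, and
convexity gives continuity away from the endpoints. Here `P` and `Q` are mutually absolutely
continuous because, conditionally on `W = w > 0`, they are `N(0, w)` and `N(c, w)`.

The reflection `(x, w) ↦ (c - x, w)` exchanges `P` and `Q`, so `T(P, Q) = T(Q, P)`. Since `1 - φ`
turns a test with errors `(α, β)` for `P` against `Q` into one with errors `(β, α)` for `Q`
against `P`, continuity gives `β_c (β_c α) ≤ α`; strict monotonicity upgrades this to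
`β_c ∘ β_c = id`, which is the symmetry about the diagonal.
-/

open Set
open scoped Pointwise

section TradeOff

variable {Ω : Type*} [MeasurableSpace Ω]

lemma tendsto_measureReal_setOf_lt_atTop (μ : Measure Ω) [IsFiniteMeasure μ] {f : Ω → ℝ}
    (hf : Measurable f) : Tendsto (fun K : ℝ => μ.real {ω | K < f ω}) atTop (𝓝 0) := by
  have hempty : ⋂ K : ℝ, {ω | K < f ω} = ∅ :=
    iInter_eq_empty_iff.2 fun ω => ⟨f ω, by simp⟩
  have h := tendsto_measure_iInter_atTop (μ := μ) (s := fun K : ℝ => {ω | K < f ω})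
    (fun K => (hf measurableSet_Ioi).nullMeasurableSet) (fun _ _ hKL _ h => hKL.trans_lt h)
    ⟨0, measure_ne_top μ _⟩
  rw [hempty, measure_empty] at h
  exact (ENNReal.tendsto_toReal ENNReal.zero_ne_top).comp h

def IsTest (φ : Ω → ℝ) : Prop :=
  Measurable φ ∧ ∀ ω, φ ω ∈ Icc (0 : ℝ) 1

namespace IsTest

variable {φ ψ : Ω → ℝ}

lemma const {a : ℝ} (ha : a ∈ Icc (0 : ℝ) 1) : IsTest fun _ : Ω => a :=
  ⟨measurable_const, fun _ => ha⟩

lemma one_sub (hφ : IsTest φ) : IsTest fun ω => 1 - φ ω :=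
  ⟨measurable_const.sub hφ.1, fun ω => ⟨by linarith [(hφ.2 ω).2], by linarith [(hφ.2 ω).1]⟩⟩

lemma comp {Ω' : Type*} [MeasurableSpace Ω'] (hφ : IsTest φ) {e : Ω' → Ω} (he : Measurable e) :
    IsTest (φ ∘ e) :=
  ⟨hφ.1.comp he, fun ω => hφ.2 (e ω)⟩

lemma convexComb (hφ : IsTest φ) (hψ : IsTest ψ) {a b : ℝ} (ha : 0 ≤ a) (hb : 0 ≤ b)
    (hab : a + b = 1) : IsTest fun ω => a * φ ω + b * ψ ω := by
  refine ⟨(hφ.1.const_mul a).add (hψ.1.const_mul b), fun ω => ⟨?_, ?_⟩⟩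
  · have := (hφ.2 ω).1; have := (hψ.2 ω).1; positivity
  · nlinarith [(hφ.2 ω).2, (hψ.2 ω).2]

variable (μ : Measure Ω)

lemma integrable [IsFiniteMeasure μ] (hφ : IsTest φ) : Integrable φ μ :=
  .of_bound hφ.1.aestronglyMeasurable 1 <| ae_of_all _ fun ω => by
    rw [Real.norm_eq_abs, abs_of_nonneg (hφ.2 ω).1]; exact (hφ.2 ω).2

lemma integral_nonneg (hφ : IsTest φ) : 0 ≤ ∫ ω, φ ω ∂μ :=
  MeasureTheory.integral_nonneg fun ω => (hφ.2 ω).1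

lemma integral_le_one [IsProbabilityMeasure μ] (hφ : IsTest φ) : ∫ ω, φ ω ∂μ ≤ 1 := by
  simpa using integral_mono (hφ.integrable μ) (integrable_const (1 : ℝ)) fun ω => (hφ.2 ω).2

lemma integral_one_sub [IsProbabilityMeasure μ] (hφ : IsTest φ) :
    ∫ ω, 1 - φ ω ∂μ = 1 - ∫ ω, φ ω ∂μ := by
  simp [integral_sub (integrable_const 1) (hφ.integrable μ)]

lemma integral_convexComb [IsFiniteMeasure μ] (hφ : IsTest φ) (hψ : IsTest ψ) (a b : ℝ) :
    ∫ ω, a * φ ω + b * ψ ω ∂μ = a * ∫ ω, φ ω ∂μ + b * ∫ ω, ψ ω ∂μ := by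
  rw [integral_add ((hφ.integrable μ).const_mul a) ((hψ.integrable μ).const_mul b),
    integral_const_mul, integral_const_mul]

end IsTest

def typeIIErrors (P Q : Measure Ω) (α : ℝ) : Set ℝ :=
  (fun φ => 1 - ∫ ω, φ ω ∂Q) '' {φ | IsTest φ ∧ ∫ ω, φ ω ∂P ≤ α}

lemma tradeOff_eq_sInf_typeIIErrors (P Q : Measure Ω) (α : ℝ) :
    tradeOff P Q α = sInf (typeIIErrors P Q α) := by
  simp only [tradeOff, typeIIErrors, IsTest, and_assoc, Set.image, Set.mem_ofPred_eq, eq_comm]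

variable {P Q : Measure Ω} {α : ℝ}

lemma typeIIErrors_subset_Icc [IsProbabilityMeasure Q] : typeIIErrors P Q α ⊆ Icc 0 1 := by
  rintro _ ⟨φ, ⟨hφ, -⟩, rfl⟩
  exact ⟨by linarith [hφ.integral_le_one Q], by linarith [hφ.integral_nonneg Q]⟩

lemma one_sub_mem_typeIIErrors [IsProbabilityMeasure P] [IsProbabilityMeasure Q]
    (hα : α ∈ Icc (0 : ℝ) 1) : 1 - α ∈ typeIIErrors P Q α :=
  ⟨fun _ => α, ⟨IsTest.const hα, by simp⟩, by simp⟩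

lemma typeIIErrors_nonempty [IsProbabilityMeasure P] [IsProbabilityMeasure Q]
    (hα : α ∈ Icc (0 : ℝ) 1) : (typeIIErrors P Q α).Nonempty :=
  ⟨_, one_sub_mem_typeIIErrors hα⟩

lemma bddBelow_typeIIErrors [IsProbabilityMeasure Q] : BddBelow (typeIIErrors P Q α) :=
  bddBelow_Icc.mono typeIIErrors_subset_Icc

lemma tradeOff_le_of_mem [IsProbabilityMeasure Q] {b : ℝ} (hb : b ∈ typeIIErrors P Q α) :
    tradeOff P Q α ≤ b := by
  rw [tradeOff_eq_sInf_typeIIErrors]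
  exact csInf_le bddBelow_typeIIErrors hb

lemma le_tradeOff_of_forall_isTest [IsProbabilityMeasure P] [IsProbabilityMeasure Q]
    (hα : α ∈ Icc (0 : ℝ) 1) {a : ℝ}
    (h : ∀ φ : Ω → ℝ, IsTest φ → ∫ ω, φ ω ∂P ≤ α → a ≤ 1 - ∫ ω, φ ω ∂Q) :
    a ≤ tradeOff P Q α := by
  rw [tradeOff_eq_sInf_typeIIErrors]
  exact le_csInf (typeIIErrors_nonempty hα) fun _ ⟨φ, ⟨hφ, hlevel⟩, hb⟩ => hb ▸ h φ hφ hlevel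

lemma typeIIErrors_map_subset {Ω' : Type*} [MeasurableSpace Ω'] {e : Ω → Ω'}
    (he : Measurable e) (α : ℝ) : typeIIErrors (P.map e) (Q.map e) α ⊆ typeIIErrors P Q α := by
  rintro _ ⟨φ, ⟨hφ, hlevel⟩, rfl⟩
  have hmap : ∀ μ : Measure Ω, ∫ ω', φ ω' ∂(μ.map e) = ∫ ω, (φ ∘ e) ω ∂μ := fun μ =>
    integral_map he.aemeasurable hφ.1.aestronglyMeasurable
  exact ⟨φ ∘ e, ⟨hφ.comp he, hmap P ▸ hlevel⟩, by dsimp only; rw [hmap Q]⟩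

lemma tradeOff_comm_of_map_eq {e : Ω → Ω} (he : Measurable e) (hP : P.map e = Q)
    (hQ : Q.map e = P) : tradeOff Q P = tradeOff P Q := by
  funext α
  have h₁ := typeIIErrors_map_subset (P := P) (Q := Q) he α
  have h₂ := typeIIErrors_map_subset (P := Q) (Q := P) he α
  rw [hP, hQ] at h₁ h₂
  rw [tradeOff_eq_sInf_typeIIErrors, tradeOff_eq_sInf_typeIIErrors, h₁.antisymm h₂]

variable [IsProbabilityMeasure P] [IsProbabilityMeasure Q]

lemma tradeOff_le_one_sub (hα : α ∈ Icc (0 : ℝ) 1) : tradeOff P Q α ≤ 1 - α :=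
  tradeOff_le_of_mem (one_sub_mem_typeIIErrors hα)

lemma tradeOff_nonneg (hα : α ∈ Icc (0 : ℝ) 1) : 0 ≤ tradeOff P Q α := by
  rw [tradeOff_eq_sInf_typeIIErrors]
  exact le_csInf (typeIIErrors_nonempty hα) fun _ hb => (typeIIErrors_subset_Icc hb).1

lemma tradeOff_mem_Icc (hα : α ∈ Icc (0 : ℝ) 1) : tradeOff P Q α ∈ Icc (0 : ℝ) 1 :=
  ⟨tradeOff_nonneg hα, (tradeOff_le_one_sub hα).trans (by linarith [hα.1])⟩

lemma tradeOff_one : tradeOff P Q 1 = 0 :=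
  le_antisymm (by simpa using tradeOff_le_one_sub (P := P) (Q := Q) (right_mem_Icc.2 zero_le_one))
    (tradeOff_nonneg (right_mem_Icc.2 zero_le_one))

lemma convexComb_mem_typeIIErrors {x y b₁ b₂ a b : ℝ} (hb₁ : b₁ ∈ typeIIErrors P Q x)
    (hb₂ : b₂ ∈ typeIIErrors P Q y) (ha : 0 ≤ a) (hb : 0 ≤ b) (hab : a + b = 1) :
    a * b₁ + b * b₂ ∈ typeIIErrors P Q (a * x + b * y) := by
  obtain ⟨φ, ⟨hφ, hφx⟩, rfl⟩ := hb₁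
  obtain ⟨ψ, ⟨hψ, hψy⟩, rfl⟩ := hb₂
  refine ⟨fun ω => a * φ ω + b * ψ ω, ⟨hφ.convexComb hψ ha hb hab, ?_⟩, ?_⟩
  · rw [IsTest.integral_convexComb P hφ hψ]
    exact add_le_add (mul_le_mul_of_nonneg_left hφx ha) (mul_le_mul_of_nonneg_left hψy hb)
  · simp only [IsTest.integral_convexComb Q hφ hψ]
    linear_combination -hab

lemma tradeOff_convexOn : ConvexOn ℝ (Icc (0 : ℝ) 1) (tradeOff P Q) := by
  refine ⟨convex_Icc 0 1, fun x hx y hy a b ha hb hab => ?_⟩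
  have hsub : a • typeIIErrors P Q x + b • typeIIErrors P Q y ⊆
      typeIIErrors P Q (a * x + b * y) := by
    rintro _ ⟨_, ⟨b₁, hb₁, rfl⟩, _, ⟨b₂, hb₂, rfl⟩, rfl⟩
    exact convexComb_mem_typeIIErrors hb₁ hb₂ ha hb hab
  have hne : ∀ {γ t : ℝ}, γ ∈ Icc (0 : ℝ) 1 → (t • typeIIErrors P Q γ).Nonempty :=
    fun hγ => (typeIIErrors_nonempty hγ).smul_set
  have hbdd : ∀ {γ t : ℝ}, 0 ≤ t → BddBelow (t • typeIIErrors P Q γ) :=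
    fun ht => bddBelow_typeIIErrors.smul_of_nonneg ht
  simp only [smul_eq_mul, tradeOff_eq_sInf_typeIIErrors]
  calc sInf (typeIIErrors P Q (a * x + b * y))
      ≤ sInf (a • typeIIErrors P Q x + b • typeIIErrors P Q y) :=
        csInf_le_csInf bddBelow_typeIIErrors ((hne hx).add (hne hy)) hsub
    _ = a * sInf (typeIIErrors P Q x) + b * sInf (typeIIErrors P Q y) := by
        rw [csInf_add (hne hx) (hbdd ha) (hne hy) (hbdd hb), Real.sInf_smul_of_nonneg ha,
          Real.sInf_smul_of_nonneg hb, smul_eq_mul, smul_eq_mul]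

/-- Splitting `∫ φ ∂P = ∫ φ · dP/dQ ∂Q` according to whether the density exceeds `K`. -/
lemma integral_le_mul_integral_add_measureReal (hPQ : P ≪ Q) {φ : Ω → ℝ} (hφ : IsTest φ)
    {K : ℝ} (hK : 0 ≤ K) :
    ∫ ω, φ ω ∂P ≤ K * ∫ ω, φ ω ∂Q + P.real {ω | K < (P.rnDeriv Q ω).toReal} := by
  set g : Ω → ℝ := fun ω => (P.rnDeriv Q ω).toReal
  set S := {ω | K < g ω}
  have hS : MeasurableSet S := (Measure.measurable_rnDeriv P Q).ennreal_toReal measurableSet_Ioi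
  have hbound : ∀ ω, g ω * φ ω ≤ K * φ ω + S.indicator g ω := by
    intro ω
    have hg : 0 ≤ g ω := ENNReal.toReal_nonneg
    obtain ⟨hφ0, hφ1⟩ := hφ.2 ω
    by_cases hω : ω ∈ S
    · rw [indicator_of_mem hω]
      nlinarith
    · rw [indicator_of_notMem hω, add_zero]
      exact mul_le_mul_of_nonneg_right (not_lt.1 hω) hφ0
  calc ∫ ω, φ ω ∂P = ∫ ω, g ω * φ ω ∂Q := (integral_toReal_rnDeriv_mul hPQ).symm
    _ ≤ ∫ ω, K * φ ω + S.indicator g ω ∂Q :=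
        integral_mono ((integrable_toReal_rnDeriv_mul_iff hPQ).2 (hφ.integrable P))
          (((hφ.integrable Q).const_mul K).add (Measure.integrable_toReal_rnDeriv.indicator hS))
          hbound
    _ = K * ∫ ω, φ ω ∂Q + P.real S := by
        rw [integral_add ((hφ.integrable Q).const_mul K)
          (Measure.integrable_toReal_rnDeriv.indicator hS), integral_const_mul,
          integral_indicator hS, Measure.setIntegral_toReal_rnDeriv hPQ]

lemma one_sub_mul_sub_measureReal_le_tradeOff (hQP : Q ≪ P) {K : ℝ} (hK : 0 ≤ K)
    (hα : α ∈ Icc (0 : ℝ) 1) :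
    1 - K * α - Q.real {ω | K < (Q.rnDeriv P ω).toReal} ≤ tradeOff P Q α :=
  le_tradeOff_of_forall_isTest hα fun φ hφ hlevel => by
    nlinarith [integral_le_mul_integral_add_measureReal hQP hφ hK]

lemma tradeOff_pos (hPQ : P ≪ Q) (hα : α ∈ Icc (0 : ℝ) 1) (hα₁ : α < 1) :
    0 < tradeOff P Q α := by
  obtain ⟨K, hK, htail⟩ : ∃ K : ℝ, 0 < K ∧ P.real {ω | K < (P.rnDeriv Q ω).toReal} < 1 - α :=
    ((eventually_gt_atTop 0).and ((tendsto_measureReal_setOf_lt_atTop P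
      (Measure.measurable_rnDeriv P Q).ennreal_toReal).eventually
        (gt_mem_nhds (sub_pos.2 hα₁)))).exists
  refine (div_pos (sub_pos.2 htail) hK).trans_le
    (le_tradeOff_of_forall_isTest hα fun φ hφ hlevel => ?_)
  have h := integral_le_mul_integral_add_measureReal hPQ hφ.one_sub hK.le
  rw [hφ.integral_one_sub P, hφ.integral_one_sub Q] at h
  rw [div_le_iff₀ hK]
  linarith

lemma tradeOff_strictAntiOn (hPQ : P ≪ Q) : StrictAntiOn (tradeOff P Q) (Icc (0 : ℝ) 1) := by
  intro x hx y hy hxy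
  have hx₁ : x < 1 := hxy.trans_le hy.2
  have hd : 0 < 1 - x := sub_pos.2 hx₁
  set t := (1 - y) / (1 - x) with ht_def
  have ht₀ : 0 ≤ t := div_nonneg (sub_nonneg.2 hy.2) hd.le
  have ht₁ : t < 1 := (div_lt_one hd).2 (by linarith)
  have hy_eq : t • x + (1 - t) • (1 : ℝ) = y := by
    rw [ht_def, smul_eq_mul, smul_eq_mul]; field_simp; ring
  have hconv := hy_eq ▸ (tradeOff_convexOn (P := P) (Q := Q)).2 hx (right_mem_Icc.2 zero_le_one) ht₀
    (sub_nonneg.2 ht₁.le) (add_sub_cancel t 1)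
  rw [tradeOff_one, smul_zero, add_zero, smul_eq_mul] at hconv
  nlinarith [tradeOff_pos hPQ hx hx₁]

lemma tradeOff_zero (hQP : Q ≪ P) : tradeOff P Q 0 = 1 := by
  have h₀ : (0 : ℝ) ∈ Icc (0 : ℝ) 1 := left_mem_Icc.2 zero_le_one
  refine le_antisymm (by simpa using tradeOff_le_one_sub (P := P) (Q := Q) h₀) ?_
  have htail := tendsto_measureReal_setOf_lt_atTop Q (Measure.measurable_rnDeriv Q P).ennreal_toReal
  have hlim : Tendsto (fun K : ℝ => 1 - Q.real {ω | K < (Q.rnDeriv P ω).toReal}) atTop (𝓝 1) := by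
    simpa using tendsto_const_nhds.sub htail
  refine le_of_tendsto hlim ((eventually_ge_atTop 0).mono fun K hK => ?_)
  simpa using one_sub_mul_sub_measureReal_le_tradeOff hQP hK h₀

lemma continuousWithinAt_tradeOff_zero (hQP : Q ≪ P) :
    ContinuousWithinAt (tradeOff P Q) (Icc 0 1) 0 := by
  rw [ContinuousWithinAt, tradeOff_zero hQP]
  refine tendsto_order.2 ⟨fun a ha => ?_, fun b hb => ?_⟩
  · obtain ⟨K, hK, htail⟩ :
        ∃ K : ℝ, 0 < K ∧ Q.real {ω | K < (Q.rnDeriv P ω).toReal} < (1 - a) / 2 :=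
      ((eventually_gt_atTop 0).and ((tendsto_measureReal_setOf_lt_atTop Q
        (Measure.measurable_rnDeriv Q P).ennreal_toReal).eventually
          (gt_mem_nhds (by linarith)))).exists
    filter_upwards [self_mem_nhdsWithin,
      nhdsWithin_le_nhds (gt_mem_nhds (div_pos (by linarith : 0 < (1 - a) / 2) hK))]
      with α hα hαK
    have := one_sub_mul_sub_measureReal_le_tradeOff hQP hK.le hα
    rw [lt_div_iff₀ hK] at hαK
    linarith
  · filter_upwards [self_mem_nhdsWithin] with α hα
    linarith [tradeOff_le_one_sub (P := P) (Q := Q) hα, hα.1]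

lemma continuousWithinAt_tradeOff_one : ContinuousWithinAt (tradeOff P Q) (Icc 0 1) 1 := by
  rw [ContinuousWithinAt, tradeOff_one]
  have h : Tendsto (fun α : ℝ => 1 - α) (𝓝[Icc 0 1] 1) (𝓝 0) :=
    ((continuous_const.sub continuous_id).tendsto' 1 0 (sub_self 1)).mono_left nhdsWithin_le_nhds
  exact tendsto_of_tendsto_of_tendsto_of_le_of_le' tendsto_const_nhds h
    (eventually_nhdsWithin_of_forall fun α hα => tradeOff_nonneg hα)
    (eventually_nhdsWithin_of_forall fun α hα => tradeOff_le_one_sub hα)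

lemma tradeOff_continuousOn (hQP : Q ≪ P) : ContinuousOn (tradeOff P Q) (Icc 0 1) := by
  intro x hx
  rcases hx.1.eq_or_lt with rfl | hx₀
  · exact continuousWithinAt_tradeOff_zero hQP
  rcases hx.2.eq_or_lt with rfl | hx₁
  · exact continuousWithinAt_tradeOff_one
  exact ((tradeOff_convexOn.subset Ioo_subset_Icc_self (convex_Ioo 0 1)).continuousOn
    isOpen_Ioo).continuousAt (Ioo_mem_nhds hx₀ hx₁) |>.continuousWithinAt

lemma tradeOff_swap_le_of_mem {b : ℝ} (hb : b ∈ typeIIErrors P Q α) : tradeOff Q P b ≤ α := by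
  obtain ⟨φ, ⟨hφ, hlevel⟩, rfl⟩ := hb
  refine (tradeOff_le_of_mem ⟨fun ω => 1 - φ ω, ⟨hφ.one_sub, (hφ.integral_one_sub Q).le⟩, ?_⟩).trans
    hlevel
  dsimp only
  rw [hφ.integral_one_sub P, sub_sub_cancel]

lemma tradeOff_tradeOff_le (hQP : Q ≪ P) (hsymm : tradeOff Q P = tradeOff P Q)
    (hα : α ∈ Icc (0 : ℝ) 1) : tradeOff P Q (tradeOff P Q α) ≤ α := by
  have hclosed : IsClosed (Icc 0 1 ∩ tradeOff P Q ⁻¹' Iic α) :=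
    (tradeOff_continuousOn hQP).preimage_isClosed_of_isClosed isClosed_Icc isClosed_Iic
  have hsub : typeIIErrors P Q α ⊆ Icc 0 1 ∩ tradeOff P Q ⁻¹' Iic α := fun b hb =>
    ⟨typeIIErrors_subset_Icc hb, hsymm ▸ tradeOff_swap_le_of_mem hb⟩
  rw [tradeOff_eq_sInf_typeIIErrors P Q α]
  exact (hclosed.closure_subset_iff.2 hsub
    (csInf_mem_closure (typeIIErrors_nonempty hα) bddBelow_typeIIErrors)).2

lemma tradeOff_tradeOff (hPQ : P ≪ Q) (hQP : Q ≪ P) (hsymm : tradeOff Q P = tradeOff P Q)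
    (hα : α ∈ Icc (0 : ℝ) 1) : tradeOff P Q (tradeOff P Q α) = α := by
  refine le_antisymm (tradeOff_tradeOff_le hQP hsymm hα) (not_lt.1 fun hlt => ?_)
  have hβ := tradeOff_mem_Icc (P := P) (Q := Q) hα
  exact (tradeOff_tradeOff_le hQP hsymm hβ).not_gt
    (tradeOff_strictAntiOn hPQ (tradeOff_mem_Icc hβ) hα hlt)

lemma tradeOff_eq_sInf_setOf_le (hPQ : P ≪ Q) (hQP : Q ≪ P)
    (hsymm : tradeOff Q P = tradeOff P Q) (hα : α ∈ Icc (0 : ℝ) 1) :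
    tradeOff P Q α = sInf {t ∈ Icc (0 : ℝ) 1 | tradeOff P Q t ≤ α} := by
  have hinv := tradeOff_tradeOff hPQ hQP hsymm hα
  symm
  refine IsLeast.csInf_eq ⟨⟨tradeOff_mem_Icc hα, hinv.le⟩, fun t ⟨ht, hle⟩ => ?_⟩
  exact not_lt.1 fun hlt =>
    hle.not_gt (hinv ▸ tradeOff_strictAntiOn hPQ ht (tradeOff_mem_Icc hα) hlt)

end TradeOff

lemma map_prod_absolutelyContinuous_of_ae {α β γ : Type*} [MeasurableSpace α]
    [MeasurableSpace β] [MeasurableSpace γ] {μ : Measure α} {ν : Measure β} [SFinite ν]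
    {f g : α → β → γ} (hf : Measurable (Function.uncurry f)) (hg : Measurable (Function.uncurry g))
    (h : ∀ᵐ a ∂μ, ν.map (f a) ≪ ν.map (g a)) :
    (μ.prod ν).map (fun p => (f p.1 p.2, p.1)) ≪ (μ.prod ν).map (fun p => (g p.1 p.2, p.1)) := by
  have hf' : Measurable fun p : α × β => (f p.1 p.2, p.1) := hf.prodMk measurable_fst
  have hg' : Measurable fun p : α × β => (g p.1 p.2, p.1) := hg.prodMk measurable_fst
  refine Measure.AbsolutelyContinuous.mk fun A hA hgA => ?_
  rw [Measure.map_apply hg' hA, Measure.measure_prod_null (hg' hA)] at hgA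
  rw [Measure.map_apply hf' hA, Measure.measure_prod_null (hf' hA)]
  filter_upwards [hgA, h] with a hga hac
  have hslice : MeasurableSet {x | (x, a) ∈ A} := measurable_prodMk_right hA
  have hfa : Measurable (f a) := hf.comp measurable_prodMk_left
  have hga' : Measurable (g a) := hg.comp measurable_prodMk_left
  have := hac (s := {x | (x, a) ∈ A}) (by rw [Measure.map_apply hga' hslice]; exact hga)
  rwa [Measure.map_apply hfa hslice] at this

lemma gaussianReal_absolutelyContinuous_gaussianReal (μ μ' : ℝ) {v : ℝ≥0} (hv : v ≠ 0) :
    gaussianReal μ v ≪ gaussianReal μ' v :=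
  (gaussianReal_absolutelyContinuous μ hv).trans (gaussianReal_absolutelyContinuous' μ' hv)

lemma gaussianReal_map_const_add_const_mul (c s : ℝ) :
    (gaussianReal 0 1).map (fun z => c + s * z) = gaussianReal c (s ^ 2).toNNReal := by
  have h : (fun z : ℝ => c + s * z) = (c + ·) ∘ (s * ·) := rfl
  rw [h, ← Measure.map_map (measurable_const_add c) (measurable_const_mul s),
    gaussianReal_map_const_mul, gaussianReal_map_const_add, mul_zero, zero_add, mul_one,
    Real.toNNReal_of_nonneg (sq_nonneg s)]

instance inst_s7 : IsProbabilityMeasure expOne := by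
  have hint : IntegrableOn (fun w : ℝ => rexp (-w)) (Ioi 0) := by
    simpa using exp_neg_integrableOn_Ioi 0 one_pos
  constructor
  rw [expOne, withDensity_apply _ MeasurableSet.univ, setLIntegral_univ,
    ← ofReal_integral_eq_lintegral_ofReal hint (ae_of_all _ fun w => (Real.exp_pos _).le),
    integral_exp_neg_Ioi_zero, ENNReal.ofReal_one]

lemma ae_pos_expOne : ∀ᵐ w ∂expOne, 0 < w :=
  (withDensity_absolutelyContinuous _ _).ae_le (ae_restrict_mem measurableSet_Ioi)

lemma pairQ_zero : pairQ 0 = pairP := by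
  simp only [pairQ, pairP, zero_add]

instance (c : ℝ) : IsProbabilityMeasure (pairQ c) :=
  Measure.isProbabilityMeasure_map (by fun_prop)

instance : IsProbabilityMeasure pairP := pairQ_zero ▸ inferInstance

lemma pairQ_absolutelyContinuous (c c' : ℝ) : pairQ c ≪ pairQ c' := by
  refine map_prod_absolutelyContinuous_of_ae (f := fun w z => c + √w * z)
    (g := fun w z => c' + √w * z) (by fun_prop) (by fun_prop) ?_
  filter_upwards [ae_pos_expOne] with w hw
  simp only [gaussianReal_map_const_add_const_mul]
  exact gaussianReal_absolutelyContinuous_gaussianReal c c'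
    (Real.toNNReal_pos.2 (pow_pos (Real.sqrt_pos.2 hw) 2)).ne'

/-- The reflection `x ↦ c - x` in the first coordinate, absorbed by the symmetry `X₁ ↦ -X₁`. -/
lemma map_reflect_pairQ (c c' : ℝ) :
    (pairQ c').map (fun q : ℝ × ℝ => (c - q.1, q.2)) = pairQ (c - c') := by
  have hneg : (expOne.prod (gaussianReal 0 1)).map (Prod.map id fun z => -z)
      = expOne.prod (gaussianReal 0 1) := by
    rw [← Measure.map_prod_map _ _ measurable_id measurable_neg, Measure.map_id,
      gaussianReal_map_neg, neg_zero]
  have hcomp : (fun q : ℝ × ℝ => (c - q.1, q.2)) ∘ (fun p : ℝ × ℝ => (c' + √p.1 * p.2, p.1))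
      = (fun p : ℝ × ℝ => (c - c' + √p.1 * p.2, p.1)) ∘ Prod.map id fun z => -z := by
    funext p
    simp only [Function.comp_apply, Prod.map_fst, Prod.map_snd, id_eq]
    congr 1
    ring
  rw [pairQ, Measure.map_map (by fun_prop) (by fun_prop), hcomp,
    ← Measure.map_map (by fun_prop) (by fun_prop), hneg, pairQ]

theorem betaC_properties_general (c : ℝ) :
    StrictAntiOn (betaC c) (Set.Icc (0 : ℝ) 1) ∧
    ConvexOn ℝ (Set.Icc (0 : ℝ) 1) (betaC c) ∧
    ContinuousOn (betaC c) (Set.Icc (0 : ℝ) 1) ∧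
    (∀ α ∈ Set.Icc (0 : ℝ) 1, betaC c α ≤ 1 - α) ∧
    (∀ α ∈ Set.Icc (0 : ℝ) 1,
      betaC c α = sInf {t ∈ Set.Icc (0 : ℝ) 1 | betaC c t ≤ α}) := by
  have hPQ : pairP ≪ pairQ c := pairQ_zero ▸ pairQ_absolutelyContinuous 0 c
  have hQP : pairQ c ≪ pairP := pairQ_zero ▸ pairQ_absolutelyContinuous c 0
  have hsymm : tradeOff (pairQ c) pairP = tradeOff pairP (pairQ c) := by
    refine tradeOff_comm_of_map_eq (by fun_prop : Measurable fun q : ℝ × ℝ => (c - q.1, q.2))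
      ?_ ?_
    · simpa [pairQ_zero] using map_reflect_pairQ c 0
    · simpa [pairQ_zero] using map_reflect_pairQ c c
  exact ⟨tradeOff_strictAntiOn hPQ, tradeOff_convexOn, tradeOff_continuousOn hQP,
    fun α hα => tradeOff_le_one_sub hα, fun α hα => tradeOff_eq_sInf_setOf_le hPQ hQP hsymm hα⟩

/-- `β_c` is strictly decreasing, convex and continuous on `[0,1]`, satisfies
`β_c(α) ≤ 1 − α`, and is symmetric about the 45-degree line:
`β_c(α) = β_c⁻¹(α)` with `β_c⁻¹(α) = inf {t ∈ [0,1] : β_c(t) ≤ α}`. -/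
theorem betaC_properties (c : ℝ) (hc : 0 < c) :
    StrictAntiOn (betaC c) (Set.Icc (0 : ℝ) 1) ∧
    ConvexOn ℝ (Set.Icc (0 : ℝ) 1) (betaC c) ∧
    ContinuousOn (betaC c) (Set.Icc (0 : ℝ) 1) ∧
    (∀ α ∈ Set.Icc (0 : ℝ) 1, betaC c α ≤ 1 - α) ∧
    (∀ α ∈ Set.Icc (0 : ℝ) 1,
      betaC c α = sInf {t ∈ Set.Icc (0 : ℝ) 1 | betaC c t ≤ α}) :=
  betaC_properties_general c
end
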